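/- arXiv:1903.02195 — 4 statements merged into one kernel-verified Lean document; each statement's English description precedes it below -/
import Mathlib

section
/- Let (X_t) be a nonnegative integer-valued stochastic process with X_0 ≤ c adapted to a filtration, such that X_t ≥ 1 whenever X_t > 0 and for all t with X_t > 0, E[X_t − X_{t+1} | X_t] ≥ δ·X_t for a constant δ > 0. Then the expected hitting time T of state 0 satisfies E[T] ≤ (1 + ln c)/δ. -/
open MeasureTheory Filter

theorem stmt4 {Ω : Type*} {m0 : MeasurableSpace Ω} (μ : Measure Ω) [IsProbabilityMeasure μ]
    (X : ℕ → Ω → ℝ) (ℱ : Filtration ℕ m0) (hadapted : Adapted ℱ X)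
    (c δ : ℝ) (hc : 1 ≤ c) (hδ : 0 < δ)
    (hval : ∀ t ω, X t ω = 0 ∨ 1 ≤ X t ω)
    (h0 : ∀ ω, X 0 ω ≤ c)
    (hdrift : ∀ t, ∀ᵐ ω ∂μ, 0 < X t ω →
      δ * X t ω ≤ (μ[X t - X (t + 1) | ℱ t]) ω)
    (T : Ω → ℕ)
    (hT : ∀ ω, X (T ω) ω = 0 ∧ ∀ t, t < T ω → X t ω ≠ 0) :
    ∫ ω, (T ω : ℝ) ∂μ ≤ (1 + Real.log c) / δ := by
  classical
  have hXm : ∀ t, Measurable (X t) :=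
    fun t => (hadapted t).mono (ℱ.le t) le_rfl
  have hlogc : 0 ≤ Real.log c := Real.log_nonneg hc
  -- the sets A n = {T > n}
  set A : ℕ → Set Ω := fun n => {ω | n < T ω} with hAdef
  have hmemA : ∀ n ω, ω ∈ A n ↔ ∀ s ≤ n, X s ω ≠ 0 := by
    intro n ω
    constructor
    · intro h s hs
      exact (hT ω).2 s (lt_of_le_of_lt hs h)
    · intro h
      by_contra hn
      have hn' : T ω ≤ n := by simpa [hAdef] using hn
      exact h (T ω) hn' (hT ω).1
  have hAmeasF : ∀ n, MeasurableSet[ℱ n] (A n) := by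
    intro n
    have : A n = ⋂ s ∈ Finset.range (n + 1), (X s) ⁻¹' ({0}ᶜ) := by
      ext ω
      simp only [Set.mem_iInter, Finset.mem_range, Set.mem_preimage, Set.mem_compl_iff,
        Set.mem_singleton_iff, Nat.lt_succ_iff, hmemA n ω]
    rw [this]
    refine MeasurableSet.biInter (Set.to_countable _) fun s hs => ?_
    have hs' : s ≤ n := Nat.lt_succ_iff.mp (Finset.mem_range.mp hs)
    exact ℱ.mono hs' _ ((hadapted s) (measurableSet_singleton (0:ℝ)).compl)
  have hAmeas : ∀ n, MeasurableSet (A n) := fun n => ℱ.le n _ (hAmeasF n)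
  -- the potential function
  set g : ℝ → ℝ := fun x => if x = 0 then 0 else 1 + Real.log x with hgdef
  have hgm : Measurable g := by
    refine Measurable.ite ?_ measurable_const (measurable_const.add Real.measurable_log)
    simpa [Set.setOf_eq_eq_singleton] using measurableSet_singleton (0 : ℝ)
  have hgnn : ∀ x : ℝ, x = 0 ∨ 1 ≤ x → 0 ≤ g x := by
    intro x hx
    rcases hx with rfl | hx
    · simp [hgdef]
    · have hx0 : x ≠ 0 := by positivity
      simp only [hgdef, if_neg hx0]
      have := Real.log_nonneg hx
      linarith
  have hkey : ∀ x y : ℝ, 1 ≤ x → (y = 0 ∨ 1 ≤ y) → (x - y) / x ≤ g x - g y := by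
    intro x y hx hy
    have hx0 : (0:ℝ) < x := lt_of_lt_of_le one_pos hx
    rcases hy with rfl | hy
    · have hlog : 0 ≤ Real.log x := Real.log_nonneg hx
      have : (x - 0) / x = 1 := by field_simp; ring
      rw [this]
      simp only [hgdef, if_neg hx0.ne', if_pos rfl]
      linarith
    · have hy0 : (0:ℝ) < y := lt_of_lt_of_le one_pos hy
      have h1 : Real.log (y / x) ≤ y / x - 1 :=
        Real.log_le_sub_one_of_pos (div_pos hy0 hx0)
      rw [Real.log_div hy0.ne' hx0.ne'] at h1
      have h2 : g x - g y = Real.log x - Real.log y := by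
        simp only [hgdef, if_neg hx0.ne', if_neg hy0.ne']
        ring
      rw [h2]
      have h3 : (x - y) / x = 1 - y / x := by field_simp
      rw [h3]
      linarith
  -- the stopped process
  set S : ℕ → Ω → ℝ := fun n ω => g (X (min n (T ω)) ω) with hSdef
  set D : ℕ → Ω → ℝ := fun n => (A n).indicator (fun ω => g (X n ω) - g (X (n+1) ω)) with hDdef
  have hrec : ∀ n ω, S (n+1) ω = S n ω - D n ω := by
    intro n ω
    by_cases h : n < T ω
    · have h1 : min n (T ω) = n := min_eq_left h.le
      have h2 : min (n+1) (T ω) = n+1 := min_eq_left h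
      have hmem : ω ∈ A n := h
      simp [hSdef, hDdef, h1, h2, Set.indicator_of_mem hmem]
    · have h' : T ω ≤ n := not_lt.mp h
      have h1 : min n (T ω) = T ω := min_eq_right h'
      have h2 : min (n+1) (T ω) = T ω := min_eq_right (h'.trans (Nat.le_succ n))
      have hmem : ω ∉ A n := h
      simp [hSdef, hDdef, h1, h2, Set.indicator_of_notMem hmem]
  have hSnn : ∀ n ω, 0 ≤ S n ω := fun n ω => hgnn _ (hval _ ω)
  have hS0 : S 0 = fun ω => g (X 0 ω) := by
    funext ω; simp [hSdef]
  have hS0int : Integrable (S 0) μ := by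
    rw [hS0]
    refine Integrable.mono' (integrable_const (1 + Real.log c)) ((hgm.comp (hXm 0)).aestronglyMeasurable) (ae_of_all _ fun ω => ?_)
    rw [Real.norm_eq_abs, abs_of_nonneg (hgnn _ (hval 0 ω))]
    rcases hval 0 ω with h | h
    · rw [hgdef]; simp [h]; linarith
    · have hx0 : X 0 ω ≠ 0 := by positivity
      simp only [hgdef, if_neg hx0]
      have := Real.log_le_log (lt_of_lt_of_le one_pos h) (h0 ω)
      linarith
  have hS0le : ∫ ω, S 0 ω ∂μ ≤ 1 + Real.log c := by
    calc ∫ ω, S 0 ω ∂μ ≤ ∫ _ω, (1 + Real.log c) ∂μ := by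
          refine integral_mono hS0int (integrable_const _) fun ω => ?_
          rw [hS0]
          rcases hval 0 ω with h | h
          · simp [hgdef, h]; linarith
          · have hx0 : X 0 ω ≠ 0 := by positivity
            simp only [hgdef, if_neg hx0]
            have := Real.log_le_log (lt_of_lt_of_le one_pos h) (h0 ω)
            linarith
      _ = 1 + Real.log c := by simp
  -- the key drift step
  have hstep : ∀ n, Integrable (S n) μ →
      Integrable (S (n+1)) μ ∧
      δ * (μ (A n)).toReal + ∫ ω, S (n+1) ω ∂μ ≤ ∫ ω, S n ω ∂μ := by
    intro n hSn
    have hSrec : S (n+1) = fun ω => S n ω - D n ω := funext (hrec n)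
    by_cases hW : Integrable (X n - X (n+1)) μ
    · -- main case
      set Z := μ[X n - X (n+1) | ℱ n] with hZdef
      set f : Ω → ℝ := (A n).indicator (fun ω => (X n ω)⁻¹) with hfdef
      have hXnA : ∀ ω ∈ A n, 1 ≤ X n ω := by
        intro ω hω
        have := (hmemA n ω).mp hω n le_rfl
        rcases hval n ω with h | h
        · exact absurd h this
        · exact h
      have hfm : StronglyMeasurable[ℱ n] f :=
        (((hadapted n).inv).stronglyMeasurable).indicator (hAmeasF n)
      have hfb : ∀ ω, ‖f ω‖ ≤ 1 := by
        intro ω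
        rw [hfdef, Real.norm_eq_abs]
        by_cases hω : ω ∈ A n
        · rw [Set.indicator_of_mem hω]
          have h1 := hXnA ω hω
          rw [abs_of_nonneg (inv_nonneg.mpr (by linarith))]
          rw [inv_eq_one_div, div_le_one (by linarith)]
          linarith
        · rw [Set.indicator_of_notMem hω]; simp
      have hfae : AEStronglyMeasurable f μ :=
        (hfm.mono (ℱ.le n)).aestronglyMeasurable
      have hfW : Integrable (f * (X n - X (n+1))) μ :=
        hW.bdd_mul hfae (ae_of_all _ hfb)
      have hpull : μ[f * (X n - X (n+1)) | ℱ n] =ᵐ[μ] f * Z :=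
        condExp_mul_of_stronglyMeasurable_left hfm hfW hW
      have hfZint : Integrable (f * Z) μ :=
        integrable_condExp.bdd_mul hfae (ae_of_all _ hfb)
      have h1 : ∫ ω, (f * (X n - X (n+1))) ω ∂μ = ∫ ω, (f * Z) ω ∂μ := by
        rw [← integral_condExp (ℱ.le n) (f := f * (X n - X (n+1)))]
        exact integral_congr_ae hpull
      have h2 : δ * (μ (A n)).toReal ≤ ∫ ω, (f * Z) ω ∂μ := by
        have hind : ∫ ω, (A n).indicator (fun _ => δ) ω ∂μ = δ * (μ (A n)).toReal := by
          rw [integral_indicator_const δ (hAmeas n)]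
          rw [smul_eq_mul, mul_comm]
          rfl
        rw [← hind]
        refine integral_mono_ae ((integrable_const δ).indicator (hAmeas n)) hfZint ?_
        filter_upwards [hdrift n] with ω hd
        by_cases hω : ω ∈ A n
        · have hx1 := hXnA ω hω
          have hx0 : (0:ℝ) < X n ω := lt_of_lt_of_le one_pos hx1
          have hz := hd hx0
          rw [Set.indicator_of_mem hω]
          simp only [Pi.mul_apply, hfdef, Set.indicator_of_mem hω]
          rw [inv_mul_eq_div, le_div_iff₀ hx0]
          exact hz
        · rw [Set.indicator_of_notMem hω]
          simp only [Pi.mul_apply, hfdef, Set.indicator_of_notMem hω, zero_mul, le_refl]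
      have h3 : ∀ ω, (f * (X n - X (n+1))) ω ≤ D n ω := by
        intro ω
        by_cases hω : ω ∈ A n
        · have hx1 := hXnA ω hω
          have hx0 : (0:ℝ) < X n ω := lt_of_lt_of_le one_pos hx1
          simp only [Pi.mul_apply, Pi.sub_apply, hfdef, hDdef, Set.indicator_of_mem hω]
          rw [inv_mul_eq_div]
          exact hkey _ _ hx1 (hval (n+1) ω)
        · simp only [Pi.mul_apply, Pi.sub_apply, hfdef, hDdef,
            Set.indicator_of_notMem hω, zero_mul, le_refl]
      have hDub : ∀ ω, D n ω ≤ (A n).indicator (S n) ω := by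
        intro ω
        by_cases hω : ω ∈ A n
        · have hmin : min n (T ω) = n := min_eq_left (le_of_lt hω)
          simp only [hDdef, hSdef, Set.indicator_of_mem hω, hmin]
          have := hgnn _ (hval (n+1) ω)
          linarith
        · simp [hDdef, Set.indicator_of_notMem hω]
      have hSind : Integrable ((A n).indicator (S n)) μ := hSn.indicator (hAmeas n)
      have hDm : AEStronglyMeasurable (D n) μ :=
        (((hgm.comp (hXm n)).sub (hgm.comp (hXm (n+1)))).indicator (hAmeas n)).aestronglyMeasurable
      have hDint : Integrable (D n) μ := by
        refine Integrable.mono' (hfW.abs.add hSind.abs) hDm (ae_of_all _ fun ω => ?_)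
        rw [Real.norm_eq_abs, abs_le]
        constructor
        · have := h3 ω
          have := neg_abs_le ((f * (X n - X (n+1))) ω)
          have := abs_nonneg ((A n).indicator (S n) ω)
          simp only [Pi.add_apply, Pi.abs_apply]
          linarith
        · have := hDub ω
          have := le_abs_self ((A n).indicator (S n) ω)
          have := abs_nonneg ((f * (X n - X (n+1))) ω)
          simp only [Pi.add_apply, Pi.abs_apply]
          linarith
      have hDge : δ * (μ (A n)).toReal ≤ ∫ ω, D n ω ∂μ := by
        calc δ * (μ (A n)).toReal ≤ ∫ ω, (f * Z) ω ∂μ := h2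
          _ = ∫ ω, (f * (X n - X (n+1))) ω ∂μ := h1.symm
          _ ≤ ∫ ω, D n ω ∂μ := integral_mono hfW hDint h3
      have hS1int : Integrable (S (n+1)) μ := by
        rw [hSrec]; exact hSn.sub hDint
      refine ⟨hS1int, ?_⟩
      rw [hSrec, integral_sub hSn hDint]
      linarith
    · -- degenerate case: the increment is not integrable, forcing X n = 0 a.e.
      have hze : μ[X n - X (n+1) | ℱ n] = 0 := condExp_of_not_integrable hW
      have hX0 : ∀ᵐ ω ∂μ, X n ω = 0 := by
        filter_upwards [hdrift n] with ω hd
        rcases hval n ω with h | h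
        · exact h
        · exfalso
          have hx0 : (0:ℝ) < X n ω := lt_of_lt_of_le one_pos h
          have := hd hx0
          rw [hze] at this
          simp only [Pi.zero_apply] at this
          nlinarith
      have hA0 : μ (A n) = 0 := by
        refine measure_mono_null ?_ (by simpa [ae_iff] using hX0)
        intro ω hω
        exact (hmemA n ω).mp hω n le_rfl
      have hD0 : D n =ᵐ[μ] 0 := by
        filter_upwards [hX0] with ω h
        have hω : ω ∉ A n := fun hmem => ((hmemA n ω).mp hmem n le_rfl) h
        simp [hDdef, Set.indicator_of_notMem hω]
      have hSeq : S (n+1) =ᵐ[μ] S n := by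
        filter_upwards [hD0] with ω h
        rw [hrec n ω, h]
        simp
      refine ⟨hSn.congr hSeq.symm, ?_⟩
      rw [integral_congr_ae hSeq, hA0]
      simp
  -- iterate the drift step
  have hiter : ∀ n, Integrable (S n) μ ∧
      δ * ∑ t ∈ Finset.range n, (μ (A t)).toReal + ∫ ω, S n ω ∂μ ≤ ∫ ω, S 0 ω ∂μ := by
    intro n
    induction n with
    | zero => exact ⟨hS0int, by simp⟩
    | succ n ih =>
      obtain ⟨hSn, hle⟩ := ih
      obtain ⟨hS1, hstep'⟩ := hstep n hSn
      refine ⟨hS1, ?_⟩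
      rw [Finset.sum_range_succ, mul_add]
      linarith
  have hsum : ∀ n, δ * ∑ t ∈ Finset.range n, (μ (A t)).toReal ≤ 1 + Real.log c := by
    intro n
    obtain ⟨hSn, hle⟩ := hiter n
    have : 0 ≤ ∫ ω, S n ω ∂μ := integral_nonneg (hSnn n)
    linarith
  -- expected value of the truncated hitting time
  have hnat : ∀ n ω, min (T ω) n = ∑ t ∈ Finset.range n, if t < T ω then 1 else 0 := by
    intro n ω
    induction n with
    | zero => simp
    | succ n ih =>
      rw [Finset.sum_range_succ, ← ih]
      split <;> omega
  have hFdef : ∀ n, (fun ω => ((min (T ω) n : ℕ) : ℝ)) =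
      fun ω => ∑ t ∈ Finset.range n, (A t).indicator (fun _ => (1:ℝ)) ω := by
    intro n
    funext ω
    rw [hnat n ω]
    push_cast
    refine Finset.sum_congr rfl fun t _ => ?_
    by_cases h : t < T ω
    · simp [Set.indicator_of_mem (show ω ∈ A t from h), h]
    · simp [Set.indicator_of_notMem (show ω ∉ A t from h), h]
  have hFint : ∀ n, Integrable (fun ω => ((min (T ω) n : ℕ) : ℝ)) μ := by
    intro n
    rw [hFdef n]
    exact integrable_finset_sum _ fun t _ => (integrable_const (1:ℝ)).indicator (hAmeas t)
  have hFval : ∀ n, ∫ ω, ((min (T ω) n : ℕ) : ℝ) ∂μ ≤ (1 + Real.log c) / δ := by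
    intro n
    have h1 : ∫ ω, ((min (T ω) n : ℕ) : ℝ) ∂μ = ∑ t ∈ Finset.range n, (μ (A t)).toReal := by
      rw [hFdef n, integral_finset_sum _ fun t _ => (integrable_const (1:ℝ)).indicator (hAmeas t)]
      refine Finset.sum_congr rfl fun t _ => ?_
      rw [integral_indicator_const (1:ℝ) (hAmeas t)]
      simp [Measure.real]
    rw [h1, le_div_iff₀ hδ, mul_comm]
    exact hsum n
  -- conclude
  by_cases hTint : Integrable (fun ω => (T ω : ℝ)) μ
  · have htend : Tendsto (fun n => ∫ ω, ((min (T ω) n : ℕ) : ℝ) ∂μ) atTop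
        (nhds (∫ ω, (T ω : ℝ) ∂μ)) := by
      refine tendsto_integral_of_dominated_convergence (fun ω => (T ω : ℝ))
        (fun n => (hFint n).aestronglyMeasurable) hTint
        (fun n => ae_of_all _ fun ω => ?_) (ae_of_all _ fun ω => ?_)
      · rw [Real.norm_eq_abs, abs_of_nonneg (by positivity)]
        show ((min (T ω) n : ℕ) : ℝ) ≤ ((T ω : ℕ) : ℝ)
        exact_mod_cast min_le_left (T ω) n
      · refine tendsto_const_nhds.congr' ?_
        filter_upwards [eventually_ge_atTop (T ω)] with n hn
        rw [min_eq_left hn]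
    exact le_of_tendsto htend (Eventually.of_forall hFval)
  · rw [integral_undef hTint]
    positivity
end

section
/- Consider the weighted vertex cover LP relaxation and its dual edge-weighting LP. If s : E → ℕ is a feasible dual solution (i.e., for every vertex v, the sum of s over edges incident to v is at most w(v)) that is maximal (no single edge weight can be increased without violating feasibility), then the set V_C of tight vertices (vertices v with Σ_{e ∋ v} s(e) = w(v)) is a vertex cover of G, and its total weight satisfies w(V_C) ≤ 2·Σ_{e ∈ E} s(e). -/
open scoped Classical

theorem stmt6 {V : Type*} [Fintype V] [DecidableEq V]
    (G : SimpleGraph V) [Fintype G.edgeSet]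
    (w : V → ℕ) (hw : ∀ v, 0 < w v)
    (s : Sym2 V → ℕ)
    (hfeas : ∀ v : V, ∑ e ∈ G.edgeFinset.filter (fun e => v ∈ e), s e ≤ w v)
    (hmax : ∀ e ∈ G.edgeFinset, ∃ v, v ∈ e ∧
      w v < ∑ f ∈ G.edgeFinset.filter (fun f => v ∈ f), Function.update s e (s e + 1) f)
    (VC : Finset V)
    (hVC : VC = Finset.univ.filter
      (fun v => ∑ e ∈ G.edgeFinset.filter (fun e => v ∈ e), s e = w v)) :
    (∀ e ∈ G.edgeFinset, ∃ v ∈ VC, v ∈ e) ∧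
      ∑ v ∈ VC, w v ≤ 2 * ∑ e ∈ G.edgeFinset, s e := by
  subst hVC
  have tight : ∀ e ∈ G.edgeFinset, ∃ v, v ∈ e ∧
      ∑ f ∈ G.edgeFinset.filter (fun f => v ∈ f), s f = w v := by
    intro e he
    obtain ⟨v, hv, hlt⟩ := hmax e he
    refine ⟨v, hv, le_antisymm (hfeas v) ?_⟩
    have hme : e ∈ G.edgeFinset.filter (fun f => v ∈ f) := by
      simp [he, hv]
    rw [Finset.sum_update_of_mem hme] at hlt
    have hs : ∑ f ∈ G.edgeFinset.filter (fun f => v ∈ f), s f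
        = ∑ f ∈ G.edgeFinset.filter (fun f => v ∈ f) \ {e}, s f + s e :=
      Finset.sum_eq_sum_sdiff_singleton_add hme s
    omega
  constructor
  · intro e he
    obtain ⟨v, hv, ht⟩ := tight e he
    exact ⟨v, by simp [ht], hv⟩
  · have step1 : ∑ v ∈ Finset.univ.filter
        (fun v => ∑ e ∈ G.edgeFinset.filter (fun e => v ∈ e), s e = w v), w v
        ≤ ∑ v : V, ∑ e ∈ G.edgeFinset.filter (fun e => v ∈ e), s e := by
      calc ∑ v ∈ Finset.univ.filter
            (fun v => ∑ e ∈ G.edgeFinset.filter (fun e => v ∈ e), s e = w v), w v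
          = ∑ v ∈ Finset.univ.filter
            (fun v => ∑ e ∈ G.edgeFinset.filter (fun e => v ∈ e), s e = w v),
              ∑ e ∈ G.edgeFinset.filter (fun e => v ∈ e), s e := by
            apply Finset.sum_congr rfl
            intro v hv
            have := (Finset.mem_filter.mp hv).2
            omega
        _ ≤ ∑ v : V, ∑ e ∈ G.edgeFinset.filter (fun e => v ∈ e), s e :=
            Finset.sum_le_sum_of_subset (Finset.filter_subset _ _)
    have step2 : ∑ v : V, ∑ e ∈ G.edgeFinset.filter (fun e => v ∈ e), s e
        = 2 * ∑ e ∈ G.edgeFinset, s e := by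
      have : ∑ v : V, ∑ e ∈ G.edgeFinset.filter (fun e => v ∈ e), s e
          = ∑ e ∈ G.edgeFinset, ∑ v ∈ Finset.univ.filter (fun v => v ∈ e), s e := by
        simp only [Finset.sum_filter]
        exact Finset.sum_comm
      rw [this, Finset.mul_sum]
      apply Finset.sum_congr rfl
      intro e he
      induction e using Sym2.ind with
      | _ a b =>
        have hab : a ≠ b := G.ne_of_adj (by simpa using he)
        have hset : Finset.univ.filter (fun v => v ∈ s(a, b)) = {a, b} := by
          ext v
          simp [Sym2.mem_iff]
        rw [hset, Finset.sum_pair hab]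
        ring
    omega
end

section
/- For the weighted vertex cover problem with positive vertex weights, any feasible dual solution s : E → ℕ satisfies Σ_{e ∈ E} s(e) ≤ OPT, where OPT is the minimum weight of a vertex cover. Consequently, the vertex cover induced by the tight vertices of a maximal feasible dual solution is a 2-approximation of the minimum weight vertex cover. -/
open scoped Classical

theorem stmt7 {V : Type*} [Fintype V] [DecidableEq V]
    (G : SimpleGraph V) [Fintype G.edgeSet]
    (w : V → ℕ) (hw : ∀ v, 0 < w v)
    (s : Sym2 V → ℕ)
    (hfeas : ∀ v : V, ∑ e ∈ G.edgeFinset.filter (fun e => v ∈ e), s e ≤ w v)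
    (hmax : ∀ e ∈ G.edgeFinset, ∃ v, v ∈ e ∧
      w v < ∑ f ∈ G.edgeFinset.filter (fun f => v ∈ f), Function.update s e (s e + 1) f)
    (VC : Finset V)
    (hVC : VC = Finset.univ.filter
      (fun v => ∑ e ∈ G.edgeFinset.filter (fun e => v ∈ e), s e = w v)) :
    ∀ C : Finset V, (∀ e ∈ G.edgeFinset, ∃ v ∈ C, v ∈ e) →
      (∑ e ∈ G.edgeFinset, s e ≤ ∑ v ∈ C, w v) ∧
        ∑ v ∈ VC, w v ≤ 2 * ∑ v ∈ C, w v := by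
  intro C hC
  have key : ∀ S : Finset V,
      ∑ v ∈ S, ∑ e ∈ G.edgeFinset.filter (fun e => v ∈ e), s e
        = ∑ e ∈ G.edgeFinset, (S.filter (fun v => v ∈ e)).card * s e := by
    intro S
    simp only [Finset.sum_filter]
    rw [Finset.sum_comm]
    refine Finset.sum_congr rfl fun e _ => ?_
    rw [← Finset.sum_filter, Finset.sum_const, smul_eq_mul]
  have hdual : ∑ e ∈ G.edgeFinset, s e ≤ ∑ v ∈ C, w v := by
    calc ∑ e ∈ G.edgeFinset, s e
        ≤ ∑ e ∈ G.edgeFinset, (C.filter (fun v => v ∈ e)).card * s e := by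
          refine Finset.sum_le_sum fun e he => ?_
          obtain ⟨v, hvC, hve⟩ := hC e he
          have : 0 < (C.filter (fun v => v ∈ e)).card :=
            Finset.card_pos.2 ⟨v, Finset.mem_filter.2 ⟨hvC, hve⟩⟩
          exact Nat.le_mul_of_pos_left _ this
      _ = ∑ v ∈ C, ∑ e ∈ G.edgeFinset.filter (fun e => v ∈ e), s e := (key C).symm
      _ ≤ ∑ v ∈ C, w v := Finset.sum_le_sum fun v _ => hfeas v
  refine ⟨hdual, ?_⟩
  have hcard2 : ∀ e ∈ G.edgeFinset, (VC.filter (fun v => v ∈ e)).card ≤ 2 := by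
    intro e _
    induction e using Sym2.ind with
    | _ a b =>
      have hsub : VC.filter (fun v => v ∈ s(a, b)) ⊆ {a, b} := by
        intro v hv
        simp only [Finset.mem_filter, Sym2.mem_iff] at hv
        simp [hv.2]
      exact (Finset.card_le_card hsub).trans
        ((Finset.card_insert_le a {b}).trans (by simp))
  calc ∑ v ∈ VC, w v
      = ∑ v ∈ VC, ∑ e ∈ G.edgeFinset.filter (fun e => v ∈ e), s e := by
        refine Finset.sum_congr rfl fun v hv => ?_
        rw [hVC] at hv
        exact (Finset.mem_filter.1 hv).2.symm
    _ = ∑ e ∈ G.edgeFinset, (VC.filter (fun v => v ∈ e)).card * s e := key VC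
    _ ≤ ∑ e ∈ G.edgeFinset, 2 * s e :=
        Finset.sum_le_sum fun e he => Nat.mul_le_mul_right _ (hcard2 e he)
    _ = 2 * ∑ e ∈ G.edgeFinset, s e := by rw [Finset.mul_sum]
    _ ≤ 2 * ∑ v ∈ C, w v := Nat.mul_le_mul_left _ hdual
end

section
/- Let (X_t) be a stochastic process on {0, 1, 2, ...} with X_0 ≤ c, such that for every t with X_t > 0, E[X_t − X_{t+1} | filtration up to t] ≥ δ for a constant δ > 0. Then the expected hitting time T of 0 satisfies E[T] ≤ c/δ. -/
open MeasureTheory ENNReal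

theorem stmt13 {Ω : Type*} {m0 : MeasurableSpace Ω} (μ : Measure Ω) [IsProbabilityMeasure μ]
    (X : ℕ → Ω → ℝ) (ℱ : Filtration ℕ m0) (hadapted : Adapted ℱ X)
    (c δ : ℝ) (hc : 0 ≤ c) (hδ : 0 < δ)
    (hval : ∀ t ω, ∃ n : ℕ, X t ω = n)
    (h0 : ∀ ω, X 0 ω ≤ c)
    (hdrift : ∀ t, ∀ᵐ ω ∂μ, 0 < X t ω →
      δ ≤ (μ[X t - X (t + 1) | ℱ t]) ω)
    (T : Ω → ℕ)
    (hT : ∀ ω, X (T ω) ω = 0 ∧ ∀ t, t < T ω → X t ω ≠ 0) :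
    ∫ ω, (T ω : ℝ) ∂μ ≤ c / δ := by
  classical
  have hXnn : ∀ t ω, 0 ≤ X t ω := by
    intro t ω
    obtain ⟨n, hn⟩ := hval t ω
    rw [hn]; exact n.cast_nonneg
  -- characterization of `t < T ω`
  have hTlt : ∀ ω t, t < T ω ↔ ∀ s, s ≤ t → X s ω ≠ 0 := by
    intro ω t
    constructor
    · intro h s hs
      exact (hT ω).2 s (lt_of_le_of_lt hs h)
    · intro h
      by_contra hcon
      push_neg at hcon
      exact h (T ω) hcon (hT ω).1
  set A : ℕ → Set Ω := fun t => {ω | t < T ω} with hA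
  have hXne : ∀ t, MeasurableSet[ℱ t] {ω | X t ω ≠ 0} := by
    intro t
    have h1 : MeasurableSet[ℱ t] (X t ⁻¹' {0}ᶜ) :=
      (hadapted t) (measurableSet_singleton (0 : ℝ)).compl
    exact h1
  have hAmeasF : ∀ t, MeasurableSet[ℱ t] (A t) := by
    intro t
    have hEq : A t = ⋂ s ∈ Finset.Iic t, {ω | X s ω ≠ 0} := by
      ext ω
      simp only [hA, Set.mem_setOf_eq, Set.mem_iInter, Finset.mem_Iic]
      exact hTlt ω t
    rw [hEq]
    refine MeasurableSet.biInter (Set.to_countable _) (fun s hs => ?_)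
    exact ℱ.mono (Finset.mem_Iic.mp hs) _ (hXne s)
  have hAmeas : ∀ t, MeasurableSet (A t) := fun t => ℱ.le t _ (hAmeasF t)
  have hApos : ∀ t ω, ω ∈ A t → 0 < X t ω := by
    intro t ω hω
    have hne : X t ω ≠ 0 := (hTlt ω t).1 hω t le_rfl
    exact lt_of_le_of_ne (hXnn t ω) (Ne.symm hne)
  -- measurability of X and T
  have hXmeas : ∀ t, Measurable (X t) :=
    fun t => (hadapted t).mono (ℱ.le t) le_rfl
  have hTmeas : Measurable T := by
    apply measurable_to_countable'
    intro t
    have hEq : T ⁻¹' {t} = {ω | X t ω = 0} ∩ ⋂ s ∈ Finset.range t, {ω | X s ω ≠ 0} := by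
      ext ω
      simp only [Set.mem_preimage, Set.mem_singleton_iff, Set.mem_inter_iff,
        Set.mem_setOf_eq, Set.mem_iInter, Finset.mem_range]
      constructor
      · rintro rfl
        exact ⟨(hT ω).1, fun s hs => (hT ω).2 s hs⟩
      · rintro ⟨h1, h2⟩
        have hle : T ω ≤ t := by
          by_contra hcon
          push_neg at hcon
          exact (hT ω).2 t hcon h1
        have hge : t ≤ T ω := by
          by_contra hcon
          push_neg at hcon
          exact h2 (T ω) hcon (hT ω).1
        exact le_antisymm hle hge
    rw [hEq]
    refine MeasurableSet.inter ((hXmeas t) (measurableSet_singleton 0)) ?_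
    refine MeasurableSet.biInter (Set.to_countable _) (fun s _ => ?_)
    exact ℱ.le s _ (hXne s)
  -- the stopped process
  set Y : ℕ → Ω → ℝ := fun n ω => X (min n (T ω)) ω with hY
  have hYnn : ∀ n ω, 0 ≤ Y n ω := fun n ω => hXnn _ _
  have hYmeas : ∀ n, Measurable (Y n) := by
    intro n
    have hEq : Y n = fun ω => ∑ k ∈ Finset.range (n + 1),
        Set.indicator {ω | min n (T ω) = k} (X k) ω := by
      funext ω
      have hmem : min n (T ω) ∈ Finset.range (n + 1) := by
        simp [Nat.lt_succ_iff, min_le_left]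
      rw [Finset.sum_eq_single (min n (T ω))]
      · simp [hY, Set.indicator_of_mem, Set.mem_setOf_eq]
      · intro k _ hk
        exact Set.indicator_of_notMem (fun h => hk (h.symm)) _
      · intro h; exact absurd hmem h
    rw [hEq]
    refine Finset.measurable_sum _ (fun k _ => ?_)
    refine (hXmeas k).indicator ?_
    exact (measurable_const.min hTmeas) (measurableSet_singleton k)
  -- key induction
  have key : ∀ n, Integrable (Y n) μ ∧
      ∫ ω, Y n ω ∂μ + δ * ∑ t ∈ Finset.range n, (μ (A t)).toReal ≤ c := by
    intro n
    induction n with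
    | zero =>
      have hY0 : Y 0 = X 0 := by
        funext ω; simp [hY]
      have hint : Integrable (Y 0) μ := by
        rw [hY0]
        refine (integrable_const c).mono' (hXmeas 0).aestronglyMeasurable ?_
        refine ae_of_all _ fun ω => ?_
        rw [Real.norm_eq_abs, abs_of_nonneg (hXnn 0 ω)]
        exact h0 ω
      refine ⟨hint, ?_⟩
      simp only [Finset.range_zero, Finset.sum_empty, mul_zero, add_zero]
      calc ∫ ω, Y 0 ω ∂μ ≤ ∫ _, c ∂μ := by
            refine integral_mono hint (integrable_const c) fun ω => ?_
            rw [hY0]; exact h0 ω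
        _ = c := by simp
    | succ n ih =>
      obtain ⟨ihint, ihbound⟩ := ih
      by_cases hint : Integrable (X n - X (n + 1)) μ
      · -- integrable case
        have hYrec : Y (n + 1) = fun ω => Y n ω - (A n).indicator (X n - X (n + 1)) ω := by
          funext ω
          by_cases h : n < T ω
          · have h1 : min (n + 1) (T ω) = n + 1 := min_eq_left h
            have h2 : min n (T ω) = n := min_eq_left h.le
            have hmem : ω ∈ A n := h
            simp only [hY, h1, h2, Set.indicator_of_mem hmem, Pi.sub_apply]
            ring
          · push_neg at h
            have h1 : min (n + 1) (T ω) = T ω := min_eq_right (h.trans (Nat.le_succ n))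
            have h2 : min n (T ω) = T ω := min_eq_right h
            have hmem : ω ∉ A n := by
              simp only [hA, Set.mem_setOf_eq, not_lt]; exact h
            simp [hY, h1, h2, Set.indicator_of_notMem hmem]
        have hintInd : Integrable ((A n).indicator (X n - X (n + 1))) μ :=
          hint.indicator (hAmeas n)
        have hYint : Integrable (Y (n + 1)) μ := by
          rw [hYrec]; exact ihint.sub hintInd
        -- the set integral bound
        have hsetbound : δ * (μ (A n)).toReal ≤ ∫ ω in A n, (X n - X (n + 1)) ω ∂μ := by
          have hce : ∫ ω in A n, (X n - X (n + 1)) ω ∂μ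
              = ∫ ω in A n, (μ[X n - X (n + 1)|ℱ n]) ω ∂μ :=
            (setIntegral_condExp (ℱ.le n) hint (hAmeasF n)).symm
          have hge : ∀ᵐ ω ∂(μ.restrict (A n)),
              (fun _ => δ) ω ≤ (μ[X n - X (n + 1)|ℱ n]) ω := by
            rw [ae_restrict_iff' (hAmeas n)]
            filter_upwards [hdrift n] with ω hω hmem
            exact hω (hApos n ω hmem)
          have hle : ∫ _ in A n, δ ∂μ ≤ ∫ ω in A n, (μ[X n - X (n + 1)|ℱ n]) ω ∂μ :=
            integral_mono_ae (integrable_const δ) integrable_condExp.restrict hge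
          have hconst : ∫ _ in A n, δ ∂μ = δ * (μ (A n)).toReal := by
            rw [setIntegral_const, smul_eq_mul, mul_comm, measureReal_def]
          rw [hce]
          calc δ * (μ (A n)).toReal = ∫ _ in A n, δ ∂μ := hconst.symm
            _ ≤ _ := hle
        have hYint1 : ∫ ω, Y (n + 1) ω ∂μ
            = ∫ ω, Y n ω ∂μ - ∫ ω in A n, (X n - X (n + 1)) ω ∂μ := by
          have : ∫ ω, Y (n + 1) ω ∂μ
              = ∫ ω, (Y n ω - (A n).indicator (X n - X (n + 1)) ω) ∂μ := by
            rw [hYrec]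
          rw [this, integral_sub ihint hintInd, integral_indicator (hAmeas n)]
        refine ⟨hYint, ?_⟩
        rw [Finset.sum_range_succ, mul_add]
        have h2 := hsetbound
        rw [hYint1]
        linarith
      · -- non-integrable case: the condexp is 0, so a.e. X n = 0
        have hz : μ[X n - X (n + 1)|ℱ n] = 0 := condExp_of_not_integrable hint
        have hAn0 : μ (A n) = 0 := by
          rw [measure_eq_zero_iff_ae_notMem]
          filter_upwards [hdrift n] with ω hω hmem
          have hpos : 0 < X n ω := hApos n ω hmem
          have := hω hpos
          rw [hz] at this
          simp only [Pi.zero_apply] at this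
          linarith
        have hYeq : Y (n + 1) =ᵐ[μ] Y n := by
          filter_upwards [measure_eq_zero_iff_ae_notMem.mp hAn0] with ω hω
          have h : T ω ≤ n := by
            simpa [hA, Set.mem_setOf_eq, not_lt] using hω
          have h1 : min (n + 1) (T ω) = T ω := min_eq_right (h.trans (Nat.le_succ n))
          have h2 : min n (T ω) = T ω := min_eq_right h
          simp [hY, h1, h2]
        refine ⟨ihint.congr hYeq.symm, ?_⟩
        rw [Finset.sum_range_succ, integral_congr_ae hYeq, hAn0]
        simp only [ENNReal.toReal_zero, add_zero]
        exact ihbound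
  -- real-valued partial sum bound
  have hsum : ∀ n, ∑ t ∈ Finset.range n, (μ (A t)).toReal ≤ c / δ := by
    intro n
    obtain ⟨hint, hbound⟩ := key n
    have h2 : 0 ≤ ∫ ω, Y n ω ∂μ := integral_nonneg (fun ω => hYnn n ω)
    rw [le_div_iff₀ hδ, mul_comm]
    linarith
  -- ENNReal tsum bound
  have hsum' : ∑' t, μ (A t) ≤ ENNReal.ofReal (c / δ) := by
    rw [ENNReal.tsum_eq_iSup_sum]
    refine iSup_le fun s => ?_
    obtain ⟨n, hn⟩ := s.exists_nat_subset_range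
    calc ∑ t ∈ s, μ (A t) ≤ ∑ t ∈ Finset.range n, μ (A t) :=
          Finset.sum_le_sum_of_subset hn
      _ ≤ ENNReal.ofReal (c / δ) := by
          have hfin : ∀ t ∈ Finset.range n, μ (A t) ≠ ⊤ :=
            fun t _ => (measure_lt_top μ _).ne
          have hfs : ∑ t ∈ Finset.range n, μ (A t) ≠ ⊤ :=
            (ENNReal.sum_lt_top.mpr (fun t ht => (measure_lt_top μ _))).ne
          rw [← ENNReal.ofReal_toReal hfs]
          apply ENNReal.ofReal_le_ofReal
          rw [ENNReal.toReal_sum hfin]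
          exact hsum n
  -- lintegral of T equals the tsum
  have hTrep : ∀ ω, (T ω : ℝ≥0∞) = ∑' t, Set.indicator (A t) (fun _ => (1 : ℝ≥0∞)) ω := by
    intro ω
    have hind : ∀ t, Set.indicator (A t) (fun _ => (1 : ℝ≥0∞)) ω
        = if t < T ω then 1 else 0 := by
      intro t
      by_cases h : t < T ω
      · rw [Set.indicator_of_mem (show ω ∈ A t from h), if_pos h]
      · rw [Set.indicator_of_notMem (show ω ∉ A t from h), if_neg h]
    calc (T ω : ℝ≥0∞) = ∑ t ∈ Finset.range (T ω), 1 := by simp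
      _ = ∑' t, if t < T ω then (1 : ℝ≥0∞) else 0 := by
          rw [tsum_eq_sum (s := Finset.range (T ω))]
          · exact Finset.sum_congr rfl fun t ht => by
              rw [if_pos (Finset.mem_range.mp ht)]
          · intro t ht
            rw [if_neg (fun h => ht (Finset.mem_range.mpr h))]
      _ = ∑' t, Set.indicator (A t) (fun _ => (1 : ℝ≥0∞)) ω :=
          tsum_congr fun t => (hind t).symm
  have hlin : ∫⁻ ω, (T ω : ℝ≥0∞) ∂μ = ∑' t, μ (A t) := by
    calc ∫⁻ ω, (T ω : ℝ≥0∞) ∂μ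
        = ∫⁻ ω, ∑' t, Set.indicator (A t) (fun _ => (1 : ℝ≥0∞)) ω ∂μ :=
          lintegral_congr hTrep
      _ = ∑' t, ∫⁻ ω, Set.indicator (A t) (fun _ => (1 : ℝ≥0∞)) ω ∂μ :=
          lintegral_tsum fun t =>
            (measurable_const.indicator (hAmeas t)).aemeasurable
      _ = ∑' t, μ (A t) := by
          refine tsum_congr fun t => ?_
          rw [lintegral_indicator (hAmeas t)]
          simp
  -- conclude
  have hnn : 0 ≤ᵐ[μ] fun ω => (T ω : ℝ) := ae_of_all _ fun ω => Nat.cast_nonneg _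
  have hmeasT : AEStronglyMeasurable (fun ω => (T ω : ℝ)) μ :=
    (measurable_from_top.comp hTmeas).aestronglyMeasurable
  rw [integral_eq_lintegral_of_nonneg_ae hnn hmeasT]
  have hofReal : ∫⁻ ω, ENNReal.ofReal ((T ω : ℝ)) ∂μ = ∫⁻ ω, (T ω : ℝ≥0∞) ∂μ :=
    lintegral_congr fun ω => by rw [ENNReal.ofReal_natCast]
  rw [hofReal, hlin]
  calc (∑' t, μ (A t)).toReal ≤ (ENNReal.ofReal (c / δ)).toReal :=
        ENNReal.toReal_mono ENNReal.ofReal_ne_top hsum'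
    _ = c / δ := ENNReal.toReal_ofReal (div_nonneg hc hδ.le)
end
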